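/- There is an absolute constant C₁ > 0 such that for every set B ⊂ {z ∈ ℂ : 1/2 < |z| < 1} with 𝔻 \ B a simply connected region, C₁·|B| ≤ dcap(B), where |B| denotes the Euclidean (2-dimensional Lebesgue) area of B. -/

import Mathlib

open Complex MeasureTheory Set Filter Metric Bornology Topology

noncomputable section

/-- The upper half-plane `ℍ = {z ∈ ℂ : Im z > 0}`. -/
def UHP : Set ℂ := {z : ℂ | 0 < z.im}

/-- The open unit disk `𝔻 = {z ∈ ℂ : |z| < 1}`. -/
def unitDisk : Set ℂ := Metric.ball (0 : ℂ) 1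

/-- The annulus `{z ∈ ℂ : 1/2 < |z| < 1}`. -/
def annulus : Set ℂ := {z : ℂ | 1 / 2 < ‖z‖ ∧ ‖z‖ < 1}

/-- The hyperbolic distance on the upper half-plane (density `|dz| / Im z`):
`d(z,w) = 2 arsinh (|z - w| / (2 √(Im z · Im w)))`. -/
def uhpDist (z w : ℂ) : ℝ :=
  2 * Real.arsinh (‖z - w‖ / (2 * Real.sqrt (z.im * w.im)))

/-- The hyperbolic distance on the unit disk (density `2|dz| / (1 - |z|²)`):
`d(z,w) = 2 artanh ρ = log ((1 + ρ)/(1 - ρ))` with `ρ = |(z - w)/(1 - w̄ z)|`. -/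
def diskDist (z w : ℂ) : ℝ :=
  Real.log ((1 + ‖(z - w) / (1 - (starRingEnd ℂ) w * z)‖) /
    (1 - ‖(z - w) / (1 - (starRingEnd ℂ) w * z)‖))

/-- The closed hyperbolic neighborhood of radius one of `A` inside the upper half-plane:
`N(A) = {z ∈ ℍ : dist_hyp(z, A) ≤ 1}`. -/
def uhpHypNbhd (A : Set ℂ) : Set ℂ :=
  {z ∈ UHP | (⨅ w : A, ENNReal.ofReal (uhpDist z ↑w)) ≤ 1}

/-- The closed hyperbolic neighborhood of radius one of `B` inside the unit disk:
`N(B) = {z ∈ 𝔻 : dist_hyp(z, B) ≤ 1}`. -/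
def diskHypNbhd (B : Set ℂ) : Set ℂ :=
  {z ∈ unitDisk | (⨅ w : B, ENNReal.ofReal (diskDist z ↑w)) ≤ 1}

/-- A hull: a bounded subset of the upper half-plane such that `ℍ \ A` is a
simply connected region. -/
def IsHull (A : Set ℂ) : Prop :=
  A ⊆ UHP ∧ IsBounded A ∧ IsOpen (UHP \ A) ∧ SimplyConnectedSpace ↥(UHP \ A)

/-- `f` is a conformal map of `U` onto `V`: holomorphic on `U` and a bijection of `U` onto `V`. -/
def IsConformalMapOn (f : ℂ → ℂ) (U V : Set ℂ) : Prop :=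
  DifferentiableOn ℂ f U ∧ Set.BijOn f U V

/-- `g` is the hydrodynamically normalized conformal map of `ℍ \ A` onto `ℍ`:
conformal and `g(z) - z → 0` as `z → ∞` (which pins down `g` uniquely,
given that `z (g z - z)` has a finite limit). -/
def IsHydroMap (A : Set ℂ) (g : ℂ → ℂ) : Prop :=
  IsConformalMapOn g (UHP \ A) UHP ∧
    Tendsto (fun z => g z - z) (Bornology.cobounded ℂ ⊓ 𝓟 (UHP \ A)) (𝓝 0)

/-- `h` is the half-plane capacity of the hull `A`, witnessed by the hydrodynamically
normalized map `g`: `h = lim_{z → ∞} z (g_A(z) - z)`. -/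
def HasHcap (A : Set ℂ) (g : ℂ → ℂ) (h : ℝ) : Prop :=
  IsHydroMap A g ∧
    Tendsto (fun z => z * (g z - z)) (Bornology.cobounded ℂ ⊓ 𝓟 (UHP \ A)) (𝓝 (h : ℂ))

end

/-!
The conformal map `f : 𝔻 → 𝔻 \ B` is injective with Jacobian `|f'|²`, so `π - |B|` is the area
`∫_𝔻 |f'|²`. Since `f'²` is holomorphic, its mean value property makes `|f'|²` dominate
`|f'(0)|²` on average over every circle about `0`, and integrating in polar coordinates gives
`∫_𝔻 |f'|² ≥ π |f'(0)|²`. Hence `|B| ≤ π (1 - |f'(0)|²) ≤ -2π log |f'(0)|`, i.e. `C₁ = 1/(2π)`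
works; `f'(0) ≠ 0` because an injective holomorphic map cannot have a critical point.
-/

open Real

open scoped ENNReal

theorem norm_circleAverage_le {E : Type*} [NormedAddCommGroup E] [NormedSpace ℝ E]
    (f : ℂ → E) (c : ℂ) (R : ℝ) : ‖circleAverage f c R‖ ≤ circleAverage (‖f ·‖) c R := by
  rw [circleAverage_def, circleAverage_def, norm_smul, Real.norm_of_nonneg (by positivity),
    smul_eq_mul]
  gcongr
  exact intervalIntegral.norm_integral_le_integral_norm two_pi_pos.le

theorem integral_Ioo_circleMap_eq_circleAverage {E : Type*} [NormedAddCommGroup E]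
    [NormedSpace ℝ E] (f : ℂ → E) (c : ℂ) (R : ℝ) :
    ∫ θ in Ioo (-π) π, f (circleMap c R θ) = (2 * π) • circleAverage f c R := by
  have hper : Function.Periodic (fun θ => f (circleMap c R θ)) (2 * π) :=
    fun θ => by simp [periodic_circleMap c R θ]
  rw [circleAverage_def, smul_inv_smul₀ (by positivity), ← integral_Ioc_eq_integral_Ioo,
    ← intervalIntegral.integral_of_le (by linarith [pi_pos])]
  simpa [two_mul] using hper.intervalIntegral_add_eq (-π) 0

theorem sq_norm_le_circleAverage_sq_norm {g : ℂ → ℂ} {c : ℂ} {R : ℝ}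
    (hg : DiffContOnCl ℂ g (ball c |R|)) :
    ‖g c‖ ^ 2 ≤ circleAverage (‖g ·‖ ^ 2) c R := by
  have hsq : DiffContOnCl ℂ (g · ^ 2) (ball c |R|) :=
    ⟨hg.differentiableOn.pow 2, hg.continuousOn.pow 2⟩
  have hmean : circleAverage (g · ^ 2) c R = g c ^ 2 := hsq.circleAverage
  calc ‖g c‖ ^ 2 = ‖circleAverage (g · ^ 2) c R‖ := by rw [hmean, norm_pow]
    _ ≤ circleAverage (‖g · ^ 2‖) c R := norm_circleAverage_le _ c R
    _ = circleAverage (‖g ·‖ ^ 2) c R := by simp only [norm_pow]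

theorem ofReal_two_pi_mul_sq_norm_le_lintegral_circleMap {g : ℂ → ℂ} {r : ℝ}
    (hg : DifferentiableOn ℂ g (closedBall 0 |r|)) :
    ENNReal.ofReal (2 * π * ‖g 0‖ ^ 2) ≤
      ∫⁻ θ in Ioo (-π) π, ENNReal.ofReal (‖g (circleMap 0 r θ)‖ ^ 2) := by
  have hcont : Continuous fun θ => ‖g (circleMap 0 r θ)‖ ^ 2 :=
    (hg.continuousOn.comp_continuous (continuous_circleMap 0 r)
      fun θ => sphere_subset_closedBall (circleMap_mem_sphere' 0 r θ)).norm.pow 2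
  rw [← ofReal_integral_eq_lintegral_ofReal (hcont.integrableOn_Icc.mono_set Ioo_subset_Icc_self)
    (ae_of_all _ fun θ => by positivity), integral_Ioo_circleMap_eq_circleAverage (‖g ·‖ ^ 2),
    smul_eq_mul]
  gcongr
  exact sq_norm_le_circleAverage_sq_norm (hg.diffContOnCl_ball subset_rfl)

theorem setLIntegral_Ioo_zero_ofReal {R : ℝ} (hR : 0 ≤ R) :
    ∫⁻ r in Ioo 0 R, ENNReal.ofReal r = ENNReal.ofReal (R ^ 2 / 2) := by
  have hint : IntegrableOn (fun r : ℝ => r) (Ioo 0 R) :=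
    continuous_id.integrableOn_Icc.mono_set Ioo_subset_Icc_self
  have hnonneg : 0 ≤ᵐ[volume.restrict (Ioo 0 R)] fun r : ℝ => r :=
    ae_restrict_of_forall_mem measurableSet_Ioo fun r hr => hr.1.le
  rw [← ofReal_integral_eq_lintegral_ofReal hint hnonneg, ← integral_Ioc_eq_integral_Ioo,
    ← intervalIntegral.integral_of_le hR, integral_id]
  ring_nf

theorem Complex.polarCoord_symm_eq_circleMap (p : ℝ × ℝ) :
    Complex.polarCoord.symm p = circleMap 0 p.1 p.2 := by
  rw [Complex.polarCoord_symm_apply, circleMap_zero, Complex.exp_mul_I]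
  push_cast
  ring

theorem setLIntegral_circleMap_le_setLIntegral_ball {F : ℂ → ℝ≥0∞} {R : ℝ}
    (hF : ContinuousOn F (ball 0 R)) :
    ∫⁻ r in Ioo 0 R, ∫⁻ θ in Ioo (-π) π, ENNReal.ofReal r * F (circleMap 0 r θ) ≤
      ∫⁻ z in ball 0 R, F z := by
  set S : Set (ℝ × ℝ) := Ioo 0 R ×ˢ Ioo (-π) π
  have hS : S ⊆ polarCoord.target := by
    rw [polarCoord_target]
    exact prod_mono Ioo_subset_Ioi_self subset_rfl
  have hSball : MapsTo Complex.polarCoord.symm S (ball 0 R) := fun p hp => by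
    simpa [abs_of_pos hp.1.1] using hp.1.2
  have hmeas : AEMeasurable (fun p : ℝ × ℝ => ENNReal.ofReal p.1 * F (Complex.polarCoord.symm p))
      ((volume.prod volume).restrict S) :=
    measurable_fst.ennreal_ofReal.aemeasurable.mul
      ((hF.comp (Complex.polarCoord.continuousOn_symm.mono hS) hSball).aemeasurable
        (measurableSet_Ioo.prod measurableSet_Ioo))
  calc ∫⁻ r in Ioo 0 R, ∫⁻ θ in Ioo (-π) π, ENNReal.ofReal r * F (circleMap 0 r θ)
      = ∫⁻ p in S, ENNReal.ofReal p.1 * F (Complex.polarCoord.symm p) := by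
        rw [Measure.volume_eq_prod, setLIntegral_prod _ hmeas]
        simp only [Complex.polarCoord_symm_eq_circleMap]
    _ ≤ ∫⁻ p in polarCoord.target,
          ENNReal.ofReal p.1 • (ball 0 R).indicator F (Complex.polarCoord.symm p) :=
        (setLIntegral_congr_fun (measurableSet_Ioo.prod measurableSet_Ioo) fun p hp => by
          rw [indicator_of_mem (hSball hp), smul_eq_mul]).trans_le (lintegral_mono_set hS)
    _ = ∫⁻ z in ball 0 R, F z := by
        rw [Complex.lintegral_comp_polarCoord_symm, lintegral_indicator measurableSet_ball]

theorem volume_ball_mul_sq_norm_le_setLIntegral_sq_norm {g : ℂ → ℂ} {R : ℝ}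
    (hg : DifferentiableOn ℂ g (ball 0 R)) :
    volume (ball (0 : ℂ) R) * ENNReal.ofReal (‖g 0‖ ^ 2) ≤
      ∫⁻ z in ball 0 R, ENNReal.ofReal (‖g z‖ ^ 2) := by
  rcases le_or_gt R 0 with hR | hR
  · simp [ball_eq_empty.mpr hR]
  calc volume (ball (0 : ℂ) R) * ENNReal.ofReal (‖g 0‖ ^ 2)
      = ∫⁻ r in Ioo 0 R, ENNReal.ofReal r * ENNReal.ofReal (2 * π * ‖g 0‖ ^ 2) := by
        rw [lintegral_mul_const' _ _ ENNReal.ofReal_ne_top, setLIntegral_Ioo_zero_ofReal hR.le,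
          Complex.volume_ball, ← ENNReal.ofReal_pow hR.le, ← ENNReal.ofReal_coe_nnreal,
          NNReal.coe_real_pi, ← ENNReal.ofReal_mul (by positivity),
          ← ENNReal.ofReal_mul (by positivity), ← ENNReal.ofReal_mul (by positivity)]
        ring_nf
    _ ≤ ∫⁻ r in Ioo 0 R, ∫⁻ θ in Ioo (-π) π,
          ENNReal.ofReal r * ENNReal.ofReal (‖g (circleMap 0 r θ)‖ ^ 2) := by
        refine setLIntegral_mono' measurableSet_Ioo fun r hr => ?_
        rw [lintegral_const_mul' _ _ ENNReal.ofReal_ne_top]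
        gcongr
        exact ofReal_two_pi_mul_sq_norm_le_lintegral_circleMap
          (hg.mono (closedBall_subset_ball (by rw [abs_of_pos hr.1]; exact hr.2)))
    _ ≤ ∫⁻ z in ball 0 R, ENNReal.ofReal (‖g z‖ ^ 2) :=
        setLIntegral_circleMap_le_setLIntegral_ball
          (ENNReal.continuous_ofReal.comp_continuousOn (hg.continuousOn.norm.pow 2))

theorem setLIntegral_sq_norm_deriv_eq_volume_image {f : ℂ → ℂ} {s : Set ℂ} (hs : IsOpen s)
    (hf : DifferentiableOn ℂ f s) (hinj : InjOn f s) :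
    ∫⁻ z in s, ENNReal.ofReal (‖deriv f z‖ ^ 2) = volume (f '' s) := by
  rw [← lintegral_abs_det_fderiv_eq_addHaar_image volume hs.measurableSet (fun z hz =>
    ((hf.differentiableAt (hs.mem_nhds hz)).hasDerivAt.hasFDerivAt.restrictScalars ℝ
      ).hasFDerivWithinAt) hinj]
  congr! with z
  simp [ContinuousLinearMap.det, LinearMap.det_restrictScalars, Algebra.norm_complex_eq,
    Complex.normSq_eq_norm_sq]

theorem volume_ball_mul_sq_norm_deriv_le_volume_image {f : ℂ → ℂ} {R : ℝ}
    (hf : DifferentiableOn ℂ f (ball 0 R)) (hinj : InjOn f (ball 0 R)) :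
    volume (ball (0 : ℂ) R) * ENNReal.ofReal (‖deriv f 0‖ ^ 2) ≤ volume (f '' ball 0 R) := by
  rw [← setLIntegral_sq_norm_deriv_eq_volume_image isOpen_ball hf hinj]
  exact volume_ball_mul_sq_norm_le_setLIntegral_sq_norm (hf.deriv isOpen_ball)

theorem AnalyticAt.exists_pow_eq {h : ℂ → ℂ} {z₀ : ℂ} (hh : AnalyticAt ℂ h z₀) (hz₀ : h z₀ ≠ 0)
    {n : ℕ} (hn : n ≠ 0) : ∃ k : ℂ → ℂ, AnalyticAt ℂ k z₀ ∧ k z₀ ≠ 0 ∧ ∀ z, k z ^ n = h z := by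
  refine ⟨fun z => (h z / h z₀) ^ (n⁻¹ : ℂ) * h z₀ ^ (n⁻¹ : ℂ), ?_, ?_, fun z => ?_⟩
  · refine (hh.div_const.cpow analyticAt_const ?_).mul analyticAt_const
    simp [hz₀]
  · simp [hz₀]
  · rw [mul_pow, cpow_nat_inv_pow _ hn, cpow_nat_inv_pow _ hn, div_mul_cancel₀ _ hz₀]

/-- If `w` and `ζ w` (with `ζ` a primitive `n`-th root of unity) are both values of `φ` near
`z₀`, their preimages are distinct points with the same image under `φ ^ n`. -/
theorem not_injOn_pow_of_nhds_le_map {φ : ℂ → ℂ} {z₀ : ℂ} {U : Set ℂ} {n : ℕ}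
    (hφ : 𝓝 0 ≤ map φ (𝓝 z₀)) (hn : 2 ≤ n) (hU : U ∈ 𝓝 z₀) :
    ¬ InjOn (fun z => φ z ^ n) U := by
  intro hinj
  obtain ⟨ζ, hζ⟩ : ∃ ζ : ℂ, IsPrimitiveRoot ζ n := ⟨_, isPrimitiveRoot_exp n (by omega)⟩
  have himage : φ '' U ∈ 𝓝 0 := hφ (image_mem_map hU)
  have hrot : (ζ * ·) ⁻¹' (φ '' U) ∈ 𝓝 0 :=
    (continuous_const.mul continuous_id).continuousAt.preimage_mem_nhds (by simpa using himage)
  obtain ⟨w, ⟨⟨z₁, hz₁, hφz₁⟩, ⟨z₂, hz₂, hφz₂⟩⟩, hw⟩ :=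
    ((Filter.Eventually.filter_mono nhdsWithin_le_nhds (inter_mem himage hrot) :
      ∀ᶠ w in 𝓝[≠] 0, w ∈ φ '' U ∩ (ζ * ·) ⁻¹' (φ '' U)).and self_mem_nhdsWithin).exists
  have hne : z₁ ≠ z₂ := by
    rintro rfl
    exact hζ.ne_one (by omega) (mul_right_cancel₀ hw (by simpa [hφz₁] using hφz₂.symm))
  exact hne (hinj hz₁ hz₂ (by simp only [hφz₁, hφz₂, mul_pow, hζ.pow_eq_one, one_mul]))

/-- If `f'(z₀) = 0`, then `f - f(z₀)` vanishes to some order `n ≥ 2`, so near `z₀` it is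
`((z - z₀) k(z)) ^ n` with `k(z₀) ≠ 0`, and the inner map is a local homeomorphism. -/
theorem AnalyticAt.deriv_ne_zero_of_injOn {f : ℂ → ℂ} {z₀ : ℂ} {U : Set ℂ}
    (hf : AnalyticAt ℂ f z₀) (hU : U ∈ 𝓝 z₀) (hinj : InjOn f U) : deriv f z₀ ≠ 0 := by
  intro hderiv
  have hg : AnalyticAt ℂ (f · - f z₀) z₀ := hf.sub analyticAt_const
  have hfinite : analyticOrderAt (f · - f z₀) z₀ ≠ ⊤ := by
    intro htop
    obtain ⟨z, ⟨hz, hzU⟩, hne⟩ := (((analyticOrderAt_eq_top.mp htop).and hU |>.filter_mono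
      nhdsWithin_le_nhds : ∀ᶠ z in 𝓝[≠] z₀, f z - f z₀ = 0 ∧ z ∈ U).and self_mem_nhdsWithin).exists
    exact hne (hinj hzU (mem_of_mem_nhds hU) (sub_eq_zero.mp hz))
  obtain ⟨n, hn⟩ := ENat.ne_top_iff_exists.mp hfinite
  have hn2 : 2 ≤ n := by
    have hderiv_ord : analyticOrderAt (deriv f) z₀ ≠ 0 :=
      hf.deriv.analyticOrderAt_ne_zero.mpr hderiv
    have h2 : (2 : ℕ∞) ≤ n := by
      rw [hn, ← hf.analyticOrderAt_deriv_add_one]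
      calc (2 : ℕ∞) = 1 + 1 := one_add_one_eq_two.symm
        _ ≤ _ := by gcongr; exact Order.one_le_iff_ne_zero.mpr hderiv_ord
    exact_mod_cast h2
  obtain ⟨h, hh, hh₀, hfh⟩ := hg.analyticOrderAt_eq_natCast.mp hn.symm
  obtain ⟨k, hk, hk₀, hkh⟩ := hh.exists_pow_eq hh₀ (by omega : n ≠ 0)
  have hφ : HasStrictDerivAt (fun z => (z - z₀) * k z) (k z₀) z₀ := by
    have hlin : HasStrictDerivAt (· - z₀) (1 : ℂ) z₀ := (hasStrictDerivAt_id z₀).sub_const z₀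
    simpa using hlin.fun_mul hk.hasStrictDerivAt
  refine not_injOn_pow_of_nhds_le_map (by simpa using (hφ.map_nhds_eq hk₀).ge) hn2
    (inter_mem hU hfh) fun x ⟨hxU, hx⟩ y ⟨hyU, hy⟩ hxy => hinj hxU hyU ?_
  simp only [mul_pow, hkh] at hxy
  simp only [mem_ofPred_eq, smul_eq_mul] at hx hy
  linear_combination hx - hy + hxy

theorem one_sub_sq_div_two_le_neg_log {a : ℝ} (ha : 0 < a) : (1 - a ^ 2) / 2 ≤ -Real.log a := by
  have := Real.log_le_sub_one_of_pos (pow_pos ha 2)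
  rw [Real.log_pow] at this
  push_cast at this
  linarith

theorem pi_mul_sq_norm_deriv_add_volume_le {f : ℂ → ℂ} {B : Set ℂ} (hBdisk : B ⊆ ball 0 1)
    (hBmeas : MeasurableSet B) (hf : DifferentiableOn ℂ f (ball 0 1))
    (hbij : BijOn f (ball 0 1) (ball 0 1 \ B)) :
    π * ‖deriv f 0‖ ^ 2 + (volume B).toReal ≤ π := by
  have harea : volume (ball (0 : ℂ) 1) * ENNReal.ofReal (‖deriv f 0‖ ^ 2) + volume B ≤
      volume (ball (0 : ℂ) 1) :=
    calc _ ≤ volume (f '' ball 0 1) + volume B := by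
          gcongr; exact volume_ball_mul_sq_norm_deriv_le_volume_image hf hbij.injOn
      _ = volume (ball (0 : ℂ) 1) := by
          rw [hbij.image_eq, ← measure_sdiff_add_inter (ball (0 : ℂ) 1) hBmeas,
            inter_eq_right.mpr hBdisk]
  have hBfinite : volume B ≠ ⊤ := ((measure_mono hBdisk).trans_lt measure_ball_lt_top).ne
  have hvol : volume (ball (0 : ℂ) 1) = ENNReal.ofReal π := by
    rw [Complex.volume_ball, ENNReal.ofReal_one, one_pow, one_mul, ← ENNReal.ofReal_coe_nnreal,
      NNReal.coe_real_pi]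
  rw [hvol, ← ENNReal.ofReal_mul pi_pos.le] at harea
  have := ENNReal.toReal_mono ENNReal.ofReal_ne_top harea
  rwa [ENNReal.toReal_add ENNReal.ofReal_ne_top hBfinite, ENNReal.toReal_ofReal (by positivity),
    ENNReal.toReal_ofReal pi_pos.le] at this

/-- There is an absolute constant `C₁ > 0` such that for every `B ⊆ {1/2 < |z| < 1}` with
`𝔻 \ B` a simply connected region, `C₁ |B| ≤ dcap(B)`, where `|B|` is the Euclidean area
of `B` and `dcap(B) = -log crad(𝔻 \ B, 0) = -log |f'(0)|` for a conformal map
`f : 𝔻 → 𝔻 \ B` with `f(0) = 0`. -/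
theorem area_le_dcap :
    ∃ C₁ : ℝ, 0 < C₁ ∧
      ∀ (B : Set ℂ) (f : ℂ → ℂ),
        B ⊆ annulus →
        IsOpen (unitDisk \ B) → SimplyConnectedSpace ↥(unitDisk \ B) →
        IsConformalMapOn f unitDisk (unitDisk \ B) → f 0 = 0 →
        C₁ * (volume B).toReal ≤ -Real.log ‖deriv f 0‖ := by
  refine ⟨1 / (2 * π), by positivity, fun B f hB hopen _ ⟨hdiff, hbij⟩ _ => ?_⟩
  replace hdiff : DifferentiableOn ℂ f (ball 0 1) := hdiff
  replace hbij : BijOn f (ball 0 1) (ball 0 1 \ B) := hbij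
  replace hopen : IsOpen (ball (0 : ℂ) 1 \ B) := hopen
  have hBdisk : B ⊆ ball 0 1 := fun z hz => mem_ball_zero_iff.mpr (hB hz).2
  have hBmeas : MeasurableSet B := by
    rw [← sdiff_sdiff_cancel_left hBdisk]
    exact measurableSet_ball.diff hopen.measurableSet
  have hderiv : deriv f 0 ≠ 0 := (hdiff.analyticAt (ball_mem_nhds 0 one_pos)).deriv_ne_zero_of_injOn
    (ball_mem_nhds 0 one_pos) hbij.injOn
  have harea := pi_mul_sq_norm_deriv_add_volume_le hBdisk hBmeas hdiff hbij
  calc 1 / (2 * π) * (volume B).toReal ≤ (1 - ‖deriv f 0‖ ^ 2) / 2 := by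
        rw [div_mul_eq_mul_div, one_mul, div_le_div_iff₀ (by positivity) two_pos]
        nlinarith [pi_pos]
    _ ≤ -Real.log ‖deriv f 0‖ := one_sub_sq_div_two_le_neg_log (norm_pos_iff.mpr hderiv)
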